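/- arXiv:2003.12014 — 2 statements merged into one kernel-verified Lean document; each statement's English description precedes it below -/
import Mathlib

section
/- A subset A of X_G is large if and only if for every free ultrafilter p on X the orbit Gp meets A* = {q : A ∈ q}; i.e., Δ_p(A) ≠ ∅ for each p ∈ X*. -/
open Set

/-- A coarse structure on a set `X`. -/
structure CoarseStructure (X : Type*) where
  sets : Set (Set (X × X))
  diagonal_mem : ∀ E ∈ sets, ∀ x : X, (x, x) ∈ E
  comp_mem : ∀ E ∈ sets, ∀ E' ∈ sets,
    {q : X × X | ∃ z : X, (q.1, z) ∈ E ∧ (z, q.2) ∈ E'} ∈ sets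
  inv_mem : ∀ E ∈ sets, {q : X × X | (q.2, q.1) ∈ E} ∈ sets
  subset_mem : ∀ E ∈ sets, ∀ E', E' ⊆ E → (∀ x : X, (x, x) ∈ E') → E' ∈ sets
  covers : ⋃₀ sets = Set.univ

/-- The ball `E[A]`. -/
def ball {X : Type*} (E : Set (X × X)) (A : Set X) : Set X := {y | ∃ a ∈ A, (a, y) ∈ E}

/-- A bounded subset of a coarse space. -/
def CoarseStructure.Bounded {X : Type*} (C : CoarseStructure X) (B : Set X) : Prop :=
  ∃ E ∈ C.sets, ∃ x : X, B ⊆ ball E {x}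

/-- A finitary coarse space: uniformly finite balls. -/
def CoarseStructure.Finitary {X : Type*} (C : CoarseStructure X) : Prop :=
  ∀ E ∈ C.sets, ∃ n : ℕ, ∀ x : X, (ball E {x}).Finite ∧ (ball E {x}).ncard < n

/-- The set `X^♯` of ultrafilters all of whose members are unbounded. -/
def CoarseStructure.Sharp {X : Type*} (C : CoarseStructure X) : Set (Ultrafilter X) :=
  {p | ∀ P ∈ p, ¬ C.Bounded P}

/-- The parallelity relation on ultrafilters. -/
def CoarseStructure.Parallel {X : Type*} (C : CoarseStructure X) (p q : Ultrafilter X) : Prop :=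
  ∃ E ∈ C.sets, ∀ P ∈ p, ball E P ∈ q

/-- The entourage determined by a set of permutations. -/
def entourage {X : Type*} (F : Set (Equiv.Perm X)) : Set (X × X) :=
  {q | ∃ g ∈ F, q.2 = g q.1}

/-- The finitary coarse structure `X_G` determined by a group `G` of permutations of `X`:
its entourages are the diagonal-containing subsets of `{(x,gx) : x ∈ X, g ∈ F}`
for finite `F ⊆ G` with `id ∈ F`. -/
def XGsets {X : Type*} (G : Subgroup (Equiv.Perm X)) : Set (Set (X × X)) :=
  {E | (∀ x : X, (x, x) ∈ E) ∧ ∃ F : Finset (Equiv.Perm X),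
    (1 : Equiv.Perm X) ∈ F ∧ ↑F ⊆ (G : Set (Equiv.Perm X)) ∧ E ⊆ entourage ↑F}

/-- A free ultrafilter. -/
def IsFree {X : Type*} (p : Ultrafilter X) : Prop := (p : Filter X) ≤ Filter.cofinite

/-- `X*`, the space of free ultrafilters with the Stone topology. -/
def FreeUF (X : Type*) : Type _ := {p : Ultrafilter X // IsFree p}

instance (X : Type*) : TopologicalSpace (FreeUF X) :=
  instTopologicalSpaceSubtype

/-- The orbit `Gp` of an ultrafilter under the induced action `gp = {gP : P ∈ p}`. -/
def ufOrbit {X : Type*} (G : Subgroup (Equiv.Perm X)) (p : Ultrafilter X) :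
    Set (Ultrafilter X) :=
  {q | ∃ g ∈ G, q = Ultrafilter.map (⇑g) p}

/-- The `p`-companion `Δ_p(A) = A* ∩ Gp`. -/
def compan {X : Type*} (G : Subgroup (Equiv.Perm X)) (p : Ultrafilter X) (A : Set X) :
    Set (Ultrafilter X) :=
  {q | A ∈ q ∧ q ∈ ufOrbit G p}

/-- Large subsets of `X_G`. -/
def IsLarge {X : Type*} (G : Subgroup (Equiv.Perm X)) (A : Set X) : Prop :=
  ∃ E ∈ XGsets G, ball E A = Set.univ

/-- Thick subsets of `X_G`. -/
def IsThick {X : Type*} (G : Subgroup (Equiv.Perm X)) (A : Set X) : Prop :=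
  ∀ E ∈ XGsets G, ∃ a ∈ A, ball E {a} ⊆ A

/-- Thin (discrete) subsets of `X_G`. -/
def IsThin {X : Type*} (G : Subgroup (Equiv.Perm X)) (A : Set X) : Prop :=
  ∀ E ∈ XGsets G, ∃ B : Set X, B.Finite ∧ ∀ a ∈ A \ B, ball E {a} ∩ A = {a}

/-- Sparse subsets of `X_G`. -/
def IsSparse {X : Type*} (G : Subgroup (Equiv.Perm X)) (A : Set X) : Prop :=
  ∀ p : Ultrafilter X, IsFree p → (compan G p A).Finite

/-- Scattered subsets of `X_G`. -/
def IsScattered {X : Type*} (G : Subgroup (Equiv.Perm X)) (A : Set X) : Prop :=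
  ∀ Y ⊆ A, Y.Infinite →
    ∃ p : Ultrafilter X, IsFree p ∧ Y ∈ p ∧ (compan G p Y).Finite

/-- Close subsets of a coarse space. -/
def CoarseStructure.Close {X : Type*} (C : CoarseStructure X) (A B : Set X) : Prop :=
  ∃ E ∈ C.sets, A ⊆ ball E B ∧ B ⊆ ball E A

/-- Close subsets of `X_G`. -/
def CloseG {X : Type*} (G : Subgroup (Equiv.Perm X)) (A B : Set X) : Prop :=
  ∃ E ∈ XGsets G, A ⊆ ball E B ∧ B ⊆ ball E A

/-- Linked subsets of `X_G`. -/
def LinkedG {X : Type*} (G : Subgroup (Equiv.Perm X)) (A B : Set X) : Prop :=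
  (A.Finite ∧ B.Finite) ∨
    ∃ A' ⊆ A, ∃ B' ⊆ B, A'.Infinite ∧ B'.Infinite ∧ CloseG G A' B'


open Set

/-- The `n`-th block `{g_0^{ε_0} ⋯ g_n^{ε_n} x_n : ε_i ∈ {0,1}}`. -/
def pwBlock {X : Type*} (g : ℕ → Equiv.Perm X) (x : ℕ → X) (n : ℕ) : Set X :=
  {y | ∃ ε : Fin (n + 1) → Bool,
    y = ((List.ofFn fun i : Fin (n + 1) =>
      (g i) ^ (if ε i then 1 else 0)).prod : Equiv.Perm X) (x n)}

/-- A piece-wise shifted FP-set determined by the group `G`. -/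
def IsPWShiftedFP {X : Type*} (G : Subgroup (Equiv.Perm X)) (Y : Set X) : Prop :=
  ∃ g : ℕ → Equiv.Perm X, ∃ x : ℕ → X,
    (∀ n, g n ∈ G) ∧
    (∀ m n, m ≠ n → Disjoint (pwBlock g x m) (pwBlock g x n)) ∧
    (∀ n, (pwBlock g x n).ncard = 2 ^ (n + 1)) ∧
    Y = ⋃ n, pwBlock g x n

/-- The group of all self-homeomorphisms of a topological space, as a subgroup
of the permutation group. -/
def homeoSubgroup (X : Type*) [TopologicalSpace X] : Subgroup (Equiv.Perm X) where
  carrier := {g | Continuous g ∧ Continuous g.symm}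
  one_mem' := ⟨continuous_id, continuous_id⟩
  mul_mem' := by
    rintro a b ⟨ha1, ha2⟩ ⟨hb1, hb2⟩
    refine ⟨?_, ?_⟩
    · simpa [Equiv.Perm.mul_def, Equiv.coe_trans] using ha1.comp hb1
    · simpa [Equiv.Perm.mul_def, Equiv.symm_trans_apply] using (hb2.comp ha2 : _)
  inv_mem' := by
    rintro a ⟨ha1, ha2⟩
    exact ⟨ha2, by exact ha1⟩


/-- The parallelity relation on ultrafilters over the coarse space `X_G`. -/
def ParallelG {X : Type*} (G : Subgroup (Equiv.Perm X)) (p q : Ultrafilter X) : Prop :=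
  ∃ E ∈ XGsets G, ∀ P ∈ p, ball E P ∈ q

/-- Linked subsets of a coarse space. -/
def CoarseStructure.Linked {X : Type*} (C : CoarseStructure X) (A B : Set X) : Prop :=
  (C.Bounded A ∧ C.Bounded B) ∨
    ∃ A' ⊆ A, ∃ B' ⊆ B, ¬ C.Bounded A' ∧ ¬ C.Bounded B' ∧ C.Close A' B'

/-- The orbit `Gp` viewed as a subset of the space `X*` of free ultrafilters. -/
def freeOrbit {X : Type*} (G : Subgroup (Equiv.Perm X)) (p : Ultrafilter X) :
    Set (FreeUF X) :=
  {q | q.1 ∈ ufOrbit G p}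
/-!
A large set has finitely many translates `g⁻¹ A`, `g ∈ G`, covering `X`; every ultrafilter `p`
contains one of them, so `A ∈ gp`. Conversely, if `A` is not large, then by transitivity no
finite union of translates `g⁻¹ A` is cofinite (the finitely many missing points could be moved
into `A` by finitely many more elements of `G`). The complements of finite unions of translates
therefore generate, together with the cofinite filter, a proper filter, and any free ultrafilter
refining it avoids every `g⁻¹ A`, i.e. `Δ_p(A) = ∅`.
-/

section

variable {X : Type*} (G : Subgroup (Equiv.Perm X)) (A : Set X)

theorem isLarge_iff_exists_finset_iUnion_preimage_eq_univ :
    IsLarge G A ↔ ∃ F : Finset (Equiv.Perm X), ↑F ⊆ (G : Set (Equiv.Perm X)) ∧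
      ⋃ g ∈ F, ⇑g ⁻¹' A = univ := by
  classical
  simp only [eq_univ_iff_forall, mem_iUnion₂, mem_preimage, exists_prop]
  constructor
  · rintro ⟨E, ⟨-, F, -, hFG, hEF⟩, hball⟩
    refine ⟨F.image (·⁻¹), ?_, fun y => ?_⟩
    · rw [Finset.coe_image]
      rintro _ ⟨g, hg, rfl⟩
      exact inv_mem (hFG hg)
    · obtain ⟨a, ha, haE⟩ := (eq_univ_iff_forall.mp hball) y
      obtain ⟨g, hgF, hy : y = g a⟩ := hEF haE
      subst hy
      exact ⟨g⁻¹, Finset.mem_image_of_mem _ hgF, by simpa using ha⟩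
  · rintro ⟨F, hFG, hcover⟩
    let F' := insert 1 (F.image (·⁻¹))
    have hF'G : ↑F' ⊆ (G : Set (Equiv.Perm X)) := by
      rw [Finset.coe_insert, Finset.coe_image, insert_subset_iff]
      refine ⟨one_mem G, ?_⟩
      rintro _ ⟨g, hg, rfl⟩
      exact inv_mem (hFG hg)
    refine ⟨entourage F', ⟨fun x => ⟨1, Finset.mem_insert_self _ _, rfl⟩, F',
      Finset.mem_insert_self _ _, hF'G, subset_rfl⟩, eq_univ_of_forall fun y => ?_⟩
    obtain ⟨g, hgF, hgy⟩ := hcover y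
    exact ⟨g y, hgy, g⁻¹, Finset.mem_insert_of_mem (Finset.mem_image_of_mem _ hgF), by simp⟩

theorem compan_eq_empty_iff (p : Ultrafilter X) :
    compan G p A = ∅ ↔ ∀ g ∈ G, ⇑g ⁻¹' A ∉ p := by
  simp only [eq_empty_iff_forall_notMem, compan, ufOrbit, mem_ofPred_eq]
  constructor
  · exact fun h g hg hA => h _ ⟨hA, g, hg, rfl⟩
  · rintro h _ ⟨hA, g, hg, rfl⟩
    exact h g hg hA

def IsAlmostCoveredByTranslates (B : Set X) : Prop :=
  ∃ F : Finset (Equiv.Perm X), ↑F ⊆ (G : Set (Equiv.Perm X)) ∧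
    (B \ ⋃ g ∈ F, ⇑g ⁻¹' A).Finite

variable {G A}

theorem isAlmostCoveredByTranslates_of_finite {B : Set X} (hB : B.Finite) :
    IsAlmostCoveredByTranslates G A B :=
  ⟨∅, by simp, hB.sdiff⟩

theorem isAlmostCoveredByTranslates_preimage {g : Equiv.Perm X} (hg : g ∈ G) :
    IsAlmostCoveredByTranslates G A (⇑g ⁻¹' A) :=
  ⟨{g}, by simpa using hg, by simp⟩

theorem IsAlmostCoveredByTranslates.mono {B C : Set X} (hC : IsAlmostCoveredByTranslates G A C)
    (hBC : B ⊆ C) : IsAlmostCoveredByTranslates G A B :=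
  let ⟨F, hFG, hfin⟩ := hC
  ⟨F, hFG, hfin.subset (sdiff_subset_sdiff_left hBC)⟩

theorem IsAlmostCoveredByTranslates.union [DecidableEq (Equiv.Perm X)] {B C : Set X}
    (hB : IsAlmostCoveredByTranslates G A B) (hC : IsAlmostCoveredByTranslates G A C) :
    IsAlmostCoveredByTranslates G A (B ∪ C) := by
  obtain ⟨F, hFG, hBfin⟩ := hB
  obtain ⟨F', hF'G, hCfin⟩ := hC
  refine ⟨F ∪ F', by simpa using ⟨hFG, hF'G⟩, (hBfin.union hCfin).subset ?_⟩
  simp only [Finset.set_biUnion_union]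
  exact union_sdiff_distrib.trans_subset
    (union_subset_union (sdiff_subset_sdiff_right subset_union_left)
      (sdiff_subset_sdiff_right subset_union_right))

theorem isLarge_of_isAlmostCoveredByTranslates_univ [Infinite X]
    (htrans : ∀ x y : X, ∃ g ∈ G, g x = y) (h : IsAlmostCoveredByTranslates G A univ) :
    IsLarge G A := by
  classical
  obtain ⟨F, hFG, hfin⟩ := h
  obtain ⟨a, ha⟩ : A.Nonempty := by
    rw [nonempty_iff_ne_empty]
    rintro rfl
    exact infinite_univ (by simpa using hfin)
  choose φ hφG hφa using fun x => htrans x a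
  rw [isLarge_iff_exists_finset_iUnion_preimage_eq_univ]
  refine ⟨F ∪ hfin.toFinset.image φ, ?_, eq_univ_of_forall fun y => ?_⟩
  · rw [Finset.coe_union, Finset.coe_image, union_subset_iff]
    exact ⟨hFG, image_subset_iff.mpr fun x _ => hφG x⟩
  · by_cases hy : y ∈ ⋃ g ∈ F, ⇑g ⁻¹' A
    · exact biUnion_subset_biUnion_left (by simp) hy
    · refine mem_biUnion (x := φ y) ?_ (by simpa [hφa] using ha)
      exact Finset.mem_union_right _
        (Finset.mem_image_of_mem φ (hfin.mem_toFinset.mpr ⟨mem_univ y, hy⟩))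

theorem exists_isFree_forall_preimage_notMem [Infinite X]
    (htrans : ∀ x y : X, ∃ g ∈ G, g x = y) (hA : ¬ IsLarge G A) :
    ∃ p : Ultrafilter X, IsFree p ∧ ∀ g ∈ G, ⇑g ⁻¹' A ∉ p := by
  classical
  let f : Filter X := Filter.comk (IsAlmostCoveredByTranslates G A)
    (isAlmostCoveredByTranslates_of_finite finite_empty) (fun _ hC _ hBC => hC.mono hBC)
    (fun _ hB _ hC => hB.union hC)
  have : f.NeBot := ⟨fun hbot => hA <| isLarge_of_isAlmostCoveredByTranslates_univ htrans <| by
    simpa [f] using Filter.empty_mem_iff_bot.mpr hbot⟩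
  refine ⟨Ultrafilter.of f, fun s hs => Ultrafilter.of_le f ?_, fun g hg => ?_⟩
  · exact Filter.mem_comk.mpr (isAlmostCoveredByTranslates_of_finite hs)
  · rw [← Ultrafilter.compl_mem_iff_notMem]
    exact Ultrafilter.of_le f (Filter.compl_mem_comk.mpr (isAlmostCoveredByTranslates_preimage hg))

end

/-- A subset `A` of `X_G` is large iff `Δ_p(A) ≠ ∅` for every free
ultrafilter `p` on `X`. -/
theorem large_iff_companions_nonempty {X : Type*} [Infinite X]
    (G : Subgroup (Equiv.Perm X)) (htrans : ∀ x y : X, ∃ g ∈ G, g x = y)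
    (A : Set X) :
    IsLarge G A ↔ ∀ p : Ultrafilter X, IsFree p → compan G p A ≠ ∅ := by
  constructor
  · rw [isLarge_iff_exists_finset_iUnion_preimage_eq_univ]
    rintro ⟨F, hFG, hcover⟩ p -
    have hmem : (⋃ g ∈ F, ⇑g ⁻¹' A) ∈ p := hcover ▸ Filter.univ_mem
    obtain ⟨g, hgF, hg⟩ := (Ultrafilter.finite_biUnion_mem_iff F.finite_toSet).mp hmem
    rw [Ne, compan_eq_empty_iff, not_forall₂]
    exact ⟨g, hFG hgF, not_not.mpr hg⟩
  · contrapose!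
    intro hA
    obtain ⟨p, hp, hpA⟩ := exists_isFree_forall_preimage_notMem htrans hA
    exact ⟨p, hp, (compan_eq_empty_iff G A p).mpr hpA⟩
end

section
/- There exist 2^𝔠 distinct λ-tight finitary coarse structures on ω that are not δ-tight. -/
open Set

open Set

/-!
For a free ultrafilter `p` on `ω` let `G_p` be the group of permutations `g` with `g(p) = p`.
It contains every transposition, so the bounded sets of `X_{G_p}` are the finite ones.
Two infinite sets contain disjoint infinite subsets `A'`, `B'` with `A' ∪ B' ∉ p`; a permutation
exchanging `A'` and `B'` and fixing the rest lies in `G_p`, so `A'` and `B'` are close. If `P ∈ p`,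
every ball around `Pᶜ` lies in finitely many translates `g(Pᶜ)`, `g ∈ G_p`, none of which is in
`p`; so `P` and `Pᶜ` are not close. Since a permutation agreeing pointwise with finitely many
elements of `G_p` lies in `G_p`, the entourages of `X_{G_p}` determine `G_p`, hence `p`.
Finally, an independent family of size `𝔠` on `ω` yields `2^𝔠` free ultrafilters.
-/

open Filter
open scoped Cardinal

theorem Set.Infinite.exists_union_disjoint_infinite {X : Type*} {s : Set X} (hs : s.Infinite) :
    ∃ t u : Set X, t ∪ u = s ∧ Disjoint t u ∧ t.Infinite ∧ u.Infinite ∧ Nonempty (t ≃ u) := by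
  obtain ⟨t, u, rfl, hd, hcard⟩ := hs.exists_union_disjoint_cardinal_eq_of_infinite
  have hiff : t.Infinite ↔ u.Infinite := by
    simp only [← Set.infinite_coe_iff, Cardinal.infinite_iff, hcard]
  have ht : t.Infinite := by
    by_contra ht
    exact hs (Set.finite_union.2 ⟨Set.not_infinite.1 ht, Set.not_infinite.1 (mt hiff.2 ht)⟩)
  exact ⟨t, u, rfl, hd, ht, hiff.1 ht, Cardinal.eq.1 hcard⟩

theorem Set.Infinite.exists_disjoint_infinite_subsets {X : Type*} {A B : Set X}
    (hA : A.Infinite) (hB : B.Infinite) :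
    ∃ A' ⊆ A, ∃ B' ⊆ B, A'.Infinite ∧ B'.Infinite ∧ Disjoint A' B' := by
  by_cases hAB : (A ∩ B).Infinite
  · obtain ⟨t, u, htu, hd, ht, hu, -⟩ := hAB.exists_union_disjoint_infinite
    exact ⟨t, (htu ▸ Set.subset_union_left).trans Set.inter_subset_left,
      u, (htu ▸ Set.subset_union_right).trans Set.inter_subset_right, ht, hu, hd⟩
  · rw [Set.not_infinite] at hAB
    refine ⟨A \ B, Set.sdiff_subset, B \ A, Set.sdiff_subset, ?_, ?_, disjoint_sdiff_sdiff⟩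
    · simpa only [Set.sdiff_self_inter] using hA.sdiff hAB
    · simpa only [Set.inter_comm A, Set.sdiff_self_inter] using hB.sdiff hAB

theorem Set.Infinite.nonempty_equiv {X : Type*} [Countable X] {A B : Set X}
    (hA : A.Infinite) (hB : B.Infinite) : Nonempty (A ≃ B) := by
  have := hA.to_subtype
  have := hB.to_subtype
  exact Cardinal.eq.1 ((Cardinal.mk_eq_aleph0 A).trans (Cardinal.mk_eq_aleph0 B).symm)

theorem exists_perm_swap_of_disjoint {X : Type*} {s t : Set X} (hd : Disjoint s t) (e : s ≃ t) :
    ∃ σ : Equiv.Perm X, Set.MapsTo σ s t ∧ Set.MapsTo σ t s ∧ ∀ x ∉ s ∪ t, σ x = x := by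
  classical
  let τ : Equiv.Perm ↥(s ∪ t) :=
    ((Equiv.Set.union hd).trans ((Equiv.sumComm s t).trans (Equiv.sumCongr e.symm e))).trans
      (Equiv.Set.union hd).symm
  refine ⟨τ.subtypeCongr 1, fun x hx => ?_, fun x hx => ?_, fun x hx => ?_⟩
  · have hst : x ∈ s ∪ t := Or.inl hx
    simp [hst, τ, Equiv.Set.union_apply_left hd (a := ⟨x, hst⟩) hx]
  · have hst : x ∈ s ∪ t := Or.inr hx
    simp [hst, τ, Equiv.Set.union_apply_right hd (a := ⟨x, hst⟩) hx]
  · simp [hx]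

universe u

/-- Every finite Boolean combination of the `s i` is infinite: `{x | x ∈ s i ↔ i ∈ J}` is `s i`
for `i ∈ J` and `(s i)ᶜ` otherwise. -/
def IsIndependentFamily {α ι : Type*} (s : ι → Set α) : Prop :=
  ∀ J I : Set ι, I.Finite → (⋂ i ∈ I, {x | x ∈ s i ↔ i ∈ J}).Infinite

namespace IsIndependentFamily

variable {α ι : Type u} {s : ι → Set α}

theorem preimage {β : Type*} (hs : IsIndependentFamily s) {f : β → α}
    (hf : Function.Surjective f) : IsIndependentFamily fun i => f ⁻¹' s i := by
  intro J I hI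
  have h := (hs J I hI).preimage (hf.range_eq ▸ Set.subset_univ _)
  rwa [Set.preimage_iInter₂] at h

theorem exists_isFree_mem_iff (hs : IsIndependentFamily s) (J : Set ι) :
    ∃ p : Ultrafilter α, IsFree p ∧ ∀ i, s i ∈ p ↔ i ∈ J := by
  let f : Filter α := (⨅ i, 𝓟 {x | x ∈ s i ↔ i ∈ J}) ⊓ cofinite
  have : f.NeBot :=
    ((hasBasis_iInf_principal_finite _).inf hasBasis_cofinite).neBot_iff.2
      fun {IK} hIK => ((hs J IK.1 hIK.1).sdiff hIK.2).nonempty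
  have hle : (Ultrafilter.of f : Filter α) ≤ f := Ultrafilter.of_le f
  refine ⟨Ultrafilter.of f, hle.trans inf_le_right, fun i => ?_⟩
  have hi : {x | x ∈ s i ↔ i ∈ J} ∈ Ultrafilter.of f :=
    hle.trans inf_le_left (mem_iInf_of_mem i (mem_principal_self _))
  by_cases hiJ : i ∈ J
  · simpa [hiJ] using hi
  · simpa [hiJ, ← Set.compl_def, Ultrafilter.compl_mem_iff_notMem] using hi

theorem two_pow_card_le (hs : IsIndependentFamily s) :
    2 ^ #ι ≤ #{p : Ultrafilter α // IsFree p} := by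
  choose p hp using hs.exists_isFree_mem_iff
  rw [← Cardinal.mk_set]
  refine Cardinal.mk_le_of_injective (f := fun J => ⟨p J, (hp J).1⟩) fun J K hJK => ?_
  ext i
  rw [← (hp J).2, ← (hp K).2, show p J = p K from congrArg Subtype.val hJK]

end IsIndependentFamily

theorem card_isFree_le (α : Type*) :
    #{p : Ultrafilter α // IsFree p} ≤ (2 : Cardinal) ^ (2 : Cardinal) ^ #α := by
  rw [← Cardinal.mk_set, ← Cardinal.mk_set]
  refine (Cardinal.mk_subtype_le _).trans (Cardinal.mk_le_of_injective
    (f := fun p : Ultrafilter α => (p : Filter α).sets) fun p q h => ?_)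
  exact Ultrafilter.coe_injective (Filter.filter_eq h)

theorem exists_finset_separating {α : Type*} {I : Set (Set α)} (hI : I.Finite) :
    ∃ A₀ : Finset α, ∀ A : Set α, ↑A₀ ⊆ A → ∀ X ∈ I, ∀ Y ∈ I, A ∩ X = A ∩ Y → X = Y := by
  classical
  have hsep (XY : Set α × Set α) :
      ∃ F : Finset α, XY.1 ≠ XY.2 → ∃ a ∈ F, a ∈ symmDiff XY.1 XY.2 := by
    by_cases h : XY.1 = XY.2
    · exact ⟨∅, fun h' => absurd h h'⟩
    · obtain ⟨a, ha⟩ := Set.symmDiff_nonempty.2 h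
      exact ⟨{a}, fun _ => ⟨a, Finset.mem_singleton_self a, ha⟩⟩
  choose F hF using hsep
  refine ⟨(hI.prod hI).toFinset.biUnion F, fun A hA X hX Y hY hXY => ?_⟩
  by_contra hne
  obtain ⟨a, haF, ha⟩ := hF (X, Y) hne
  have haA : a ∈ A := hA (Finset.mem_biUnion.2 ⟨(X, Y), by simp [hX, hY], haF⟩)
  have hiff : a ∈ X ↔ a ∈ Y := by
    simpa [haA] using Set.ext_iff.1 hXY a
  rcases ha with ⟨haX, haY⟩ | ⟨haY, haX⟩
  · exact haY (hiff.1 haX)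
  · exact haX (hiff.2 haY)

open Classical in
/-- Hausdorff's independent family of size `𝔠` on the countable set of pairs `(A, 𝒜)`. -/
def traceFamily (X : Set ℕ) : Set (Finset ℕ × Finset (Finset ℕ)) :=
  {t | t.1.filter (· ∈ X) ∈ t.2}

theorem isIndependentFamily_traceFamily : IsIndependentFamily traceFamily := by
  classical
  intro J I hI
  obtain ⟨A₀, hA₀⟩ := exists_finset_separating hI
  let t : ℕ → Finset ℕ × Finset (Finset ℕ) := fun m =>
    (insert m A₀, ((hI.toFinset.filter (· ∈ J)).image fun Y => (insert m A₀).filter (· ∈ Y)))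
  have hmem : ∀ m, ∀ X ∈ I, t m ∈ traceFamily X ↔ X ∈ J := by
    intro m X hX
    have hsep := hA₀ (insert m A₀ : Finset ℕ) (by simp)
    change (insert m A₀).filter (· ∈ X) ∈
      (hI.toFinset.filter (· ∈ J)).image (fun Y => (insert m A₀).filter (· ∈ Y)) ↔ X ∈ J
    simp only [Finset.mem_image, Finset.mem_filter, Set.Finite.mem_toFinset]
    constructor
    · rintro ⟨Y, ⟨hY, hYJ⟩, hYX⟩
      rwa [← hsep Y hY X hX (by simpa [Set.ext_iff, Finset.ext_iff] using hYX)]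
    · exact fun hXJ => ⟨X, ⟨hX, hXJ⟩, rfl⟩
  have hinj : Set.InjOn t (↑A₀)ᶜ := fun m _ m' hm' h => by
    have h1 : insert m A₀ = insert m' A₀ := congrArg Prod.fst h
    have h2 : m' ∈ insert m A₀ := h1 ▸ Finset.mem_insert_self m' A₀
    exact ((Finset.mem_insert.1 h2).resolve_right hm').symm
  refine ((A₀.finite_toSet.infinite_compl).image hinj).mono ?_
  rintro _ ⟨m, -, rfl⟩
  exact Set.mem_iInter₂.2 fun X hX => hmem m X hX

theorem card_isFree_nat : #{p : Ultrafilter ℕ // IsFree p} = 2 ^ Cardinal.continuum := by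
  obtain ⟨f, hf⟩ := exists_surjective_nat (Finset ℕ × Finset (Finset ℕ))
  refine le_antisymm ?_ ?_
  · simpa [Cardinal.two_power_aleph0] using card_isFree_le ℕ
  · simpa [Cardinal.two_power_aleph0] using
      (isIndependentFamily_traceFamily.preimage hf).two_pow_card_le

section PermGroup

open scoped Pointwise

variable {X : Type*}

theorem entourage_mem_XGsets {G : Subgroup (Equiv.Perm X)} {F : Finset (Equiv.Perm X)}
    (h1 : 1 ∈ F) (hF : ↑F ⊆ (G : Set (Equiv.Perm X))) : entourage ↑F ∈ XGsets G :=
  ⟨fun _ => ⟨1, h1, rfl⟩, F, h1, hF, subset_rfl⟩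

theorem ball_subset_biUnion_image {E : Set (X × X)} {F : Finset (Equiv.Perm X)}
    (hEF : E ⊆ entourage ↑F) (A : Set X) :
    ball E A ⊆ ⋃ g ∈ (F : Set (Equiv.Perm X)), g '' A := by
  rintro y ⟨a, ha, hay⟩
  obtain ⟨g, hg, hy⟩ := hEF hay
  exact Set.mem_biUnion hg ⟨a, ha, hy.symm⟩

theorem ball_singleton_subset_image {E : Set (X × X)} {F : Finset (Equiv.Perm X)}
    (hEF : E ⊆ entourage ↑F) (x : X) : ball E {x} ⊆ (fun g : Equiv.Perm X => g x) '' ↑F := by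
  rintro y ⟨a, rfl, hay⟩
  obtain ⟨g, hg, hy⟩ := hEF hay
  exact ⟨g, hg, hy.symm⟩

/-- The coarse structure `X_G`; transitivity of `G` is what makes its entourages cover `X × X`. -/
def CoarseStructure.ofPermGroup (G : Subgroup (Equiv.Perm X))
    (hG : ∀ a b : X, ∃ g ∈ G, g a = b) : CoarseStructure X where
  sets := XGsets G
  diagonal_mem _ hE := hE.1
  comp_mem := by
    classical
    rintro E ⟨hd, F, h1, hFG, hEF⟩ E' ⟨hd', F', h1', hF'G, hE'F'⟩
    refine ⟨fun x => ⟨x, hd x, hd' x⟩, F' * F, one_mul (1 : Equiv.Perm X) ▸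
      Finset.mul_mem_mul h1' h1, fun k hk => ?_, ?_⟩
    · obtain ⟨g', hg', g, hg, rfl⟩ := Finset.mem_mul.1 hk
      exact G.mul_mem (hF'G hg') (hFG hg)
    · rintro ⟨x, y⟩ ⟨z, hxz, hzy⟩
      obtain ⟨g, hg, hz⟩ := hEF hxz
      obtain ⟨g', hg', hy⟩ := hE'F' hzy
      exact ⟨g' * g, Finset.mul_mem_mul hg' hg, hy.trans (congrArg g' hz)⟩
  inv_mem := by
    classical
    rintro E ⟨hd, F, h1, hFG, hEF⟩
    refine ⟨fun x => hd x, F⁻¹, by simpa using Finset.inv_mem_inv h1, fun k hk => ?_, ?_⟩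
    · obtain ⟨g, hg, rfl⟩ := Finset.mem_inv.1 hk
      exact G.inv_mem (hFG hg)
    · rintro ⟨x, y⟩ hxy
      obtain ⟨g, hg, hx⟩ := hEF hxy
      exact ⟨g⁻¹, Finset.inv_mem_inv hg, g.eq_symm_apply.2 hx.symm⟩
  subset_mem := by
    rintro E ⟨-, F, h1, hFG, hEF⟩ E' hE'E hd'
    exact ⟨hd', F, h1, hFG, hE'E.trans hEF⟩
  covers := by
    classical
    refine Set.eq_univ_of_forall fun ⟨a, b⟩ => ?_
    obtain ⟨g, hg, rfl⟩ := hG a b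
    have h1 : (1 : Equiv.Perm X) ∈ ({1, g} : Finset (Equiv.Perm X)) := by simp
    refine ⟨_, entourage_mem_XGsets h1 ?_, g, by simp, rfl⟩
    simp [Set.insert_subset_iff, G.one_mem, hg]

namespace CoarseStructure.ofPermGroup

variable {G : Subgroup (Equiv.Perm X)} {hG : ∀ a b : X, ∃ g ∈ G, g a = b}

theorem finitary : (ofPermGroup G hG).Finitary := by
  rintro E ⟨-, F, -, -, hEF⟩
  refine ⟨F.card + 1, fun x => ?_⟩
  have hsub := ball_singleton_subset_image hEF x
  have hfin : ((fun g : Equiv.Perm X => g x) '' ↑F).Finite := F.finite_toSet.image _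
  refine ⟨hfin.subset hsub, Nat.lt_succ_of_le ?_⟩
  calc (ball E {x}).ncard ≤ ((fun g : Equiv.Perm X => g x) '' ↑F).ncard :=
        Set.ncard_le_ncard hsub hfin
    _ ≤ (F : Set (Equiv.Perm X)).ncard := Set.ncard_image_le F.finite_toSet
    _ = F.card := Set.ncard_coe_finset F

theorem bounded_iff_finite [Nonempty X] {B : Set X} :
    (ofPermGroup G hG).Bounded B ↔ B.Finite := by
  classical
  constructor
  · rintro ⟨E, ⟨-, F, -, -, hEF⟩, x, hB⟩
    exact ((F.finite_toSet.image _).subset (ball_singleton_subset_image hEF x)).subset hB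
  · intro hB
    let x : X := Classical.arbitrary X
    choose g hgG hgx using hG x
    refine ⟨_, entourage_mem_XGsets (Finset.mem_insert_self 1 (hB.toFinset.image g)) ?_, x,
      fun b hb => ⟨x, rfl, g b, by simpa using Or.inr ⟨b, hb, rfl⟩, (hgx b).symm⟩⟩
    rw [Finset.coe_insert, Set.insert_subset_iff, Finset.coe_image]
    exact ⟨G.one_mem, Set.image_subset_iff.2 fun b _ => hgG b⟩

end CoarseStructure.ofPermGroup

end PermGroup

def ultrafilterStabilizer {X : Type*} (p : Ultrafilter X) : Subgroup (Equiv.Perm X) where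
  carrier := {g | Ultrafilter.map g p = p}
  one_mem' := p.map_id
  mul_mem' {g h} hg hh := by
    change Ultrafilter.map (g ∘ h) p = p
    rw [← Ultrafilter.map_map, show Ultrafilter.map h p = p from hh, hg]
  inv_mem' {g} hg := by
    change Ultrafilter.map g.symm p = p
    conv_lhs => rw [← (show Ultrafilter.map g p = p from hg)]
    rw [Ultrafilter.map_map, g.symm_comp_self, Ultrafilter.map_id]

namespace ultrafilterStabilizer

variable {X : Type*} {p : Ultrafilter X} {g σ : Equiv.Perm X}

theorem preimage_mem_iff (hg : g ∈ ultrafilterStabilizer p) {s : Set X} :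
    g ⁻¹' s ∈ p ↔ s ∈ p := by
  conv_rhs => rw [← (show Ultrafilter.map g p = p from hg)]
  rfl

theorem image_mem_iff (hg : g ∈ ultrafilterStabilizer p) {s : Set X} :
    g '' s ∈ p ↔ s ∈ p := by
  rw [← preimage_mem_iff hg, Set.preimage_image_eq _ g.injective]

theorem mem_of_eventuallyEq (hg : g ∈ ultrafilterStabilizer p) (h : ⇑σ =ᶠ[p] ⇑g) :
    σ ∈ ultrafilterStabilizer p := by
  refine (Ultrafilter.coe_injective ?_).trans (show Ultrafilter.map g p = p from hg)
  simpa only [Ultrafilter.coe_map] using map_congr h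

theorem mem_of_fixedPoints_mem (h : Function.fixedPoints σ ∈ p) : σ ∈ ultrafilterStabilizer p :=
  mem_of_eventuallyEq (g := 1) (one_mem _) h

theorem mem_of_forall_exists_eq {F : Finset (Equiv.Perm X)}
    (hF : ↑F ⊆ (ultrafilterStabilizer p : Set (Equiv.Perm X)))
    (h : ∀ x, ∃ g ∈ F, σ x = g x) : σ ∈ ultrafilterStabilizer p := by
  have hcover : (⋃ g ∈ (F : Set (Equiv.Perm X)), {x | σ x = g x}) ∈ p := by
    refine Filter.mem_of_superset univ_mem fun x _ => ?_
    obtain ⟨g, hg, hx⟩ := h x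
    exact Set.mem_biUnion (Finset.mem_coe.2 hg) hx
  obtain ⟨g, hg, hσg⟩ := (Ultrafilter.finite_biUnion_mem_iff F.finite_toSet).1 hcover
  exact mem_of_eventuallyEq (hF hg) hσg

theorem mem_of_graph_subset {E : Set (X × X)} (hE : E ∈ XGsets (ultrafilterStabilizer p))
    (h : ∀ x, (x, σ x) ∈ E) : σ ∈ ultrafilterStabilizer p := by
  obtain ⟨-, F, -, hF, hEF⟩ := hE
  exact mem_of_forall_exists_eq hF fun x => hEF (h x)

theorem mem_of_ball_mem {E : Set (X × X)} (hE : E ∈ XGsets (ultrafilterStabilizer p))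
    {A : Set X} (h : ball E A ∈ p) : A ∈ p := by
  obtain ⟨-, F, -, hF, hEF⟩ := hE
  obtain ⟨g, hg, hgA⟩ := (Ultrafilter.finite_biUnion_mem_iff F.finite_toSet).1
    (mem_of_superset h (ball_subset_biUnion_image hEF A))
  exact (image_mem_iff (hF hg)).1 hgA

theorem swap_mem [DecidableEq X] (hp : IsFree p) (a b : X) :
    Equiv.swap a b ∈ ultrafilterStabilizer p := by
  refine mem_of_fixedPoints_mem (hp (Filter.mem_cofinite.2 ?_))
  refine ((Set.finite_singleton b).insert a).subset fun x hx => ?_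
  by_contra hab
  simp only [Set.mem_insert_iff, Set.mem_singleton_iff, not_or] at hab
  exact hx (Equiv.swap_apply_of_ne_of_ne hab.1 hab.2)

theorem notMem_of_mapsTo {s t : Set X} (hd : Disjoint s t) (hst : Set.MapsTo σ s t)
    (hts : Set.MapsTo σ t s) (h : s ∪ t ∈ p) : σ ∉ ultrafilterStabilizer p := by
  intro hσ
  have key : ∀ {s t : Set X}, Disjoint s t → Set.MapsTo σ s t → s ∉ p := fun hd hst hs =>
    Ultrafilter.compl_notMem_iff.2 hs <|
      mem_of_superset ((preimage_mem_iff hσ).1 (mem_of_superset hs hst)) hd.subset_compl_left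
  rcases Ultrafilter.union_mem_iff.1 h with hs | ht
  exacts [key hd hst hs, key hd.symm hts ht]

end ultrafilterStabilizer

section FreeUltrafilter

variable {X : Type*}

open ultrafilterStabilizer

/-- `X_{G_p}`, where `G_p` is the stabilizer of `p` (the group of Theorem 3.8 for `K = {p}`). -/
def CoarseStructure.ofFreeUltrafilter (p : Ultrafilter X) (hp : IsFree p) : CoarseStructure X :=
  ofPermGroup (ultrafilterStabilizer p) fun a b => by
    classical exact ⟨Equiv.swap a b, swap_mem hp a b, Equiv.swap_apply_left a b⟩

namespace CoarseStructure.ofFreeUltrafilter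

variable {p : Ultrafilter X} {hp : IsFree p}

theorem not_close_compl {P : Set X} (hP : P ∈ p) : ¬ (ofFreeUltrafilter p hp).Close P Pᶜ := by
  rintro ⟨E, hE, hPE, -⟩
  exact Ultrafilter.compl_notMem_iff.2 hP (mem_of_ball_mem hE (mem_of_superset hP hPE))

theorem close_of_disjoint {A B : Set X} (hd : Disjoint A B) (e : A ≃ B) (hAB : A ∪ B ∉ p) :
    (ofFreeUltrafilter p hp).Close A B := by
  classical
  obtain ⟨σ, hAB', hBA, hfix⟩ := exists_perm_swap_of_disjoint hd e
  have hσ : σ ∈ ultrafilterStabilizer p :=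
    mem_of_fixedPoints_mem (mem_of_superset (Ultrafilter.compl_mem_iff_notMem.2 hAB) hfix)
  have h1 : (1 : Equiv.Perm X) ∈ ({1, σ⁻¹} : Finset (Equiv.Perm X)) := by simp
  refine ⟨_, entourage_mem_XGsets h1 ?_, fun a ha => ⟨σ a, hAB' ha, σ⁻¹, by simp, by simp⟩,
    fun b hb => ⟨σ b, hBA hb, σ⁻¹, by simp, by simp⟩⟩
  simp [Set.insert_subset_iff, Subgroup.inv_mem _ hσ]

theorem exists_close_subsets [Countable X] {A B : Set X} (hA : A.Infinite) (hB : B.Infinite) :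
    ∃ A' ⊆ A, ∃ B' ⊆ B, A'.Infinite ∧ B'.Infinite ∧ (ofFreeUltrafilter p hp).Close A' B' := by
  obtain ⟨A₀, hA₀, B₀, hB₀, hA₀i, hB₀i, hd⟩ := hA.exists_disjoint_infinite_subsets hB
  obtain ⟨A₁, A₂, rfl, hdA, hA₁, hA₂, -⟩ := hA₀i.exists_union_disjoint_infinite
  obtain ⟨B₁, B₂, rfl, hdB, hB₁, hB₂, -⟩ := hB₀i.exists_union_disjoint_infinite
  rw [Set.disjoint_union_left, Set.disjoint_union_right, Set.disjoint_union_right] at hd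
  have hd₁ : Disjoint (A₁ ∪ B₁) (A₂ ∪ B₂) := by
    simp only [Set.disjoint_union_left, Set.disjoint_union_right]
    exact ⟨⟨hdA, hd.2.1.symm⟩, hd.1.2, hdB⟩
  by_cases h₁ : A₁ ∪ B₁ ∈ p
  · have h₂ : A₂ ∪ B₂ ∉ p := fun h₂ =>
      Ultrafilter.compl_notMem_iff.2 h₁ (mem_of_superset h₂ hd₁.subset_compl_left)
    exact ⟨A₂, Set.subset_union_right.trans hA₀, B₂, Set.subset_union_right.trans hB₀, hA₂, hB₂,
      close_of_disjoint hd.2.2 (hA₂.nonempty_equiv hB₂).some h₂⟩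
  · exact ⟨A₁, Set.subset_union_left.trans hA₀, B₁, Set.subset_union_left.trans hB₀, hA₁, hB₁,
      close_of_disjoint hd.1.1 (hA₁.nonempty_equiv hB₁).some h₁⟩

theorem exists_not_close [Infinite X] :
    ∃ A B : Set X, A.Infinite ∧ B.Infinite ∧ ¬ (ofFreeUltrafilter p hp).Close A B := by
  obtain ⟨t, u, htu, hd, ht, hu, -⟩ := Set.infinite_univ (α := X).exists_union_disjoint_infinite
  have hcompl : tᶜ = u := IsCompl.compl_eq ⟨hd, codisjoint_iff.2 htu⟩
  rcases p.mem_or_compl_mem t with h | h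
  · exact ⟨t, tᶜ, ht, hcompl ▸ hu, not_close_compl h⟩
  · exact ⟨tᶜ, tᶜᶜ, hcompl ▸ hu, (compl_compl t).symm ▸ ht, not_close_compl h⟩

theorem exists_mem_stabilizer_notMem {q : Ultrafilter X} (hq : IsFree q) {P : Set X}
    (hPq : P ∈ q) (hPp : P ∉ p) :
    ∃ σ ∈ ultrafilterStabilizer p, σ ∉ ultrafilterStabilizer q := by
  have hP : P.Infinite := fun hfin =>
    Ultrafilter.compl_notMem_iff.2 hPq (hq hfin.compl_mem_cofinite)
  obtain ⟨Q₁, Q₂, rfl, hd, -, -, ⟨e⟩⟩ := hP.exists_union_disjoint_infinite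
  obtain ⟨σ, h₁₂, h₂₁, hfix⟩ := exists_perm_swap_of_disjoint hd e
  have hσ : σ ∈ ultrafilterStabilizer p :=
    mem_of_fixedPoints_mem (mem_of_superset (Ultrafilter.compl_mem_iff_notMem.2 hPp) hfix)
  exact ⟨σ, hσ, notMem_of_mapsTo hd h₁₂ h₂₁ hPq⟩

theorem injective :
    Function.Injective fun p : {p : Ultrafilter X // IsFree p} => ofFreeUltrafilter p.1 p.2 := by
  classical
  rintro ⟨p, hp⟩ ⟨q, hq⟩ hpq
  by_contra hne
  obtain ⟨P, hPq, hPp⟩ : ∃ P ∈ q, P ∉ p := by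
    by_contra! h
    exact hne (Subtype.ext (Ultrafilter.coe_le_coe.1 h))
  obtain ⟨σ, hσp, hσq⟩ := exists_mem_stabilizer_notMem hq hPq hPp
  have h1 : (1 : Equiv.Perm X) ∈ ({1, σ} : Finset (Equiv.Perm X)) := by simp
  have hsets : XGsets (ultrafilterStabilizer p) = XGsets (ultrafilterStabilizer q) :=
    congrArg CoarseStructure.sets hpq
  have hE := hsets ▸ entourage_mem_XGsets h1 (by simp [Set.insert_subset_iff, hσp])
  exact hσq (mem_of_graph_subset hE fun x => ⟨σ, by simp, rfl⟩)

end CoarseStructure.ofFreeUltrafilter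

end FreeUltrafilter

/-- There exist `2^𝔠` distinct λ-tight finitary coarse structures on `ω`
that are not δ-tight. -/
theorem many_lambdaTight_not_deltaTight :
    ∃ S : Set (CoarseStructure ℕ),
      Cardinal.mk S = 2 ^ Cardinal.continuum ∧
      ∀ C ∈ S, C.Finitary ∧
        (∀ A B : Set ℕ, ¬ C.Bounded A → ¬ C.Bounded B → C.Linked A B) ∧
        ¬ (∀ A B : Set ℕ, ¬ C.Bounded A → ¬ C.Bounded B → C.Close A B) := by
  open CoarseStructure ofPermGroup ofFreeUltrafilter in
  refine ⟨Set.range fun p : {p : Ultrafilter ℕ // IsFree p} => ofFreeUltrafilter p.1 p.2, ?_, ?_⟩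
  · rw [Cardinal.mk_range_eq _ injective, card_isFree_nat]
  · rintro _ ⟨⟨p, hp⟩, rfl⟩
    have hbdd : ∀ B : Set ℕ, ¬ (ofFreeUltrafilter p hp).Bounded B ↔ B.Infinite :=
      fun B => bounded_iff_finite.not
    refine ⟨finitary, fun A B hA hB => Or.inr ?_, fun hδ => ?_⟩
    · obtain ⟨A', hA', B', hB', hA'i, hB'i, hc⟩ :=
        exists_close_subsets ((hbdd A).1 hA) ((hbdd B).1 hB)
      exact ⟨A', hA', B', hB', (hbdd A').2 hA'i, (hbdd B').2 hB'i, hc⟩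
    · obtain ⟨A, B, hA, hB, hAB⟩ := exists_not_close (hp := hp)
      exact hAB (hδ A B ((hbdd A).2 hA) ((hbdd B).2 hB))
end
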